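/- arXiv:1205.1635 — 2 statements merged into one kernel-verified Lean document; each statement's English description precedes it below -/
import Mathlib

section
/- Energy-moment identity for the Lorentz-force source: For all vectors E, B ∈ ℝ³ and every Schwartz function f : ℝ³ → ℝ, (1/6) ∫_{ℝ³} (|ξ|² − 3) μ(ξ)^{1/2} [ (1/2)(E·ξ) f(ξ) − (E + ξ×B)·∇f(ξ) ] dξ = (1/3) E · ∫_{ℝ³} ξ μ(ξ)^{1/2} f(ξ) dξ. -/
noncomputable section

open MeasureTheory
open scoped ENNReal BigOperators

/-- Velocity/position space `ℝ³`. -/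
abbrev V3 : Type := EuclideanSpace ℝ (Fin 3)

namespace VML

/-- Sign `±1` attached to the two species. -/
def sgn (s : Bool) : ℝ := if s then 1 else -1

/-- The global Maxwellian `μ`. -/
def mu (ξ : V3) : ℝ := (2 * Real.pi) ^ (-(3:ℝ)/2) * Real.exp (-‖ξ‖ ^ 2 / 2)

/-- `μ^{1/2}`. -/
def sqmu (ξ : V3) : ℝ := Real.sqrt (mu ξ)

/-- Japanese bracket `⟨ξ⟩ = (1+|ξ|²)^{1/2}`. -/
def jap (ξ : V3) : ℝ := Real.sqrt (1 + ‖ξ‖ ^ 2)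

/-- The time-velocity dependent weight `w_{τ,λ}(t,ξ)`. -/
def wgt (γ ϑ τ lam t : ℝ) (ξ : V3) : ℝ :=
  jap ξ ^ ((γ + 2) * τ) * Real.exp (lam * jap ξ ^ 2 / (1 + t) ^ ϑ)

/-- The Landau collision kernel `φ^{ij}`. -/
def phiK (γ Cphi : ℝ) (i j : Fin 3) (ξ : V3) : ℝ :=
  Cphi * ‖ξ‖ ^ (γ + 2) * ((if i = j then (1:ℝ) else 0) - ξ i * ξ j / ‖ξ‖ ^ 2)

/-- Partial derivative in the `i`-th direction of a function on `ℝ³`. -/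
def pder (i : Fin 3) (g : V3 → ℝ) : V3 → ℝ :=
  fun ξ => fderiv ℝ g ξ (EuclideanSpace.single i (1:ℝ))

/-- Multi-index derivative `∂^β` of a function on `ℝ³`. -/
def mder (β : Fin 3 → ℕ) (g : V3 → ℝ) : V3 → ℝ :=
  (pder 0)^[β 0] ((pder 1)^[β 1] ((pder 2)^[β 2] g))

/-- Length `|β|` of a multi-index. -/
def mlen (β : Fin 3 → ℕ) : ℕ := β 0 + β 1 + β 2

/-- Componentwise difference of multi-indices. -/
def msub (α α' : Fin 3 → ℕ) : Fin 3 → ℕ := fun i => α i - α' i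

/-- The Landau collision operator `Q(F,G)`. -/
def Qcoll (γ Cphi : ℝ) (F G : V3 → ℝ) : V3 → ℝ := fun ξ =>
  ∑ i : Fin 3, pder i (fun ζ =>
    ∫ ζs : V3, ∑ j : Fin 3, phiK γ Cphi i j (ζ - ζs) *
      (pder j F ζ * G ζs - F ζ * pder j G ζs)) ξ

/-- The linearized Landau operator `L_± f` for a pair `f = [f_+,f_-]`
(`s = true` is `+`, `s = false` is `-`). -/
def Lop (γ Cphi : ℝ) (f : Bool → V3 → ℝ) (s : Bool) : V3 → ℝ := fun ξ =>
  -2 * (sqmu ξ)⁻¹ * Qcoll γ Cphi (fun ζ => sqmu ζ * f s ζ) mu ξ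
    - (sqmu ξ)⁻¹ * Qcoll γ Cphi mu (fun ζ => sqmu ζ * (f s ζ + f (!s) ζ)) ξ

/-- The nonlinear Landau term `Γ_±(f,g)`. -/
def Gam (γ Cphi : ℝ) (f g : Bool → V3 → ℝ) (s : Bool) : V3 → ℝ := fun ξ =>
  (sqmu ξ)⁻¹ * Qcoll γ Cphi (fun ζ => sqmu ζ * f s ζ) (fun ζ => sqmu ζ * g s ζ) ξ
    + (sqmu ξ)⁻¹ * Qcoll γ Cphi (fun ζ => sqmu ζ * f s ζ) (fun ζ => sqmu ζ * g (!s) ζ) ξ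

/-- The Landau collision frequency `σ^{ij} = φ^{ij} ∗ μ`. -/
def sigK (γ Cphi : ℝ) (i j : Fin 3) (ξ : V3) : ℝ :=
  ∫ ζ : V3, phiK γ Cphi i j (ξ - ζ) * mu ζ

/-- Weighted `L²_ξ` norm squared `|g|²_{τ,λ}`. -/
def wnormSq (γ ϑ τ lam t : ℝ) (g : V3 → ℝ) : ℝ :=
  ∫ ξ : V3, (wgt γ ϑ τ lam t ξ) ^ 2 * (g ξ) ^ 2

/-- Weighted dissipation norm squared `|g|²_{D,τ,λ}`. -/
def wDnormSq (γ Cphi ϑ τ lam t : ℝ) (g : V3 → ℝ) : ℝ :=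
  ∑ i : Fin 3, ∑ j : Fin 3, ∫ ξ : V3, (wgt γ ϑ τ lam t ξ) ^ 2 *
    (sigK γ Cphi i j ξ * pder i g ξ * pder j g ξ
      + sigK γ Cphi i j ξ * (ξ i / 2) * (ξ j / 2) * (g ξ) ^ 2)

/-- Cross product, componentwise. -/
def crossF (a b : Fin 3 → ℝ) : Fin 3 → ℝ :=
  ![a 1 * b 2 - a 2 * b 1, a 2 * b 0 - a 0 * b 2, a 0 * b 1 - a 1 * b 0]

/-- Curl of a vector field on `ℝ³`, componentwise. -/
def curlF (u : V3 → V3) (x : V3) : Fin 3 → ℝ :=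
  ![pder 1 (fun y => u y 2) x - pder 2 (fun y => u y 1) x,
    pder 2 (fun y => u y 0) x - pder 0 (fun y => u y 2) x,
    pder 0 (fun y => u y 1) x - pder 1 (fun y => u y 0) x]

/-- Divergence of a vector field on `ℝ³`. -/
def divF (u : V3 → V3) (x : V3) : ℝ := ∑ i : Fin 3, pder i (fun y => u y i) x

/-! Derivatives of functions of `(x,ξ)`. -/

/-- `∂_{x_i}` for functions of `(x,ξ)`. -/
def pderX (i : Fin 3) (h : V3 → V3 → ℝ) : V3 → V3 → ℝ :=
  fun x ξ => fderiv ℝ (fun y => h y ξ) x (EuclideanSpace.single i (1:ℝ))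

/-- `∂^α_x` for functions of `(x,ξ)`. -/
def mderX (α : Fin 3 → ℕ) (h : V3 → V3 → ℝ) : V3 → V3 → ℝ :=
  (pderX 0)^[α 0] ((pderX 1)^[α 1] ((pderX 2)^[α 2] h))

/-- `∂^β_ξ` for functions of `(x,ξ)`. -/
def mderV (β : Fin 3 → ℕ) (h : V3 → V3 → ℝ) : V3 → V3 → ℝ := fun x => mder β (h x)

/-- `∂^α_x ∂^β_ξ` for functions of `(x,ξ)`. -/
def mderXV (α β : Fin 3 → ℕ) (h : V3 → V3 → ℝ) : V3 → V3 → ℝ := mderX α (mderV β h)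

/-- `‖·‖²_{τ,λ}`: weighted `L²_{x,ξ}` norm squared. -/
def WnormSq (γ ϑ τ lam t : ℝ) (h : V3 → V3 → ℝ) : ℝ := ∫ x : V3, wnormSq γ ϑ τ lam t (h x)

/-- `‖·‖²_{D,τ,λ}`: weighted dissipation norm squared over `(x,ξ)`. -/
def WDnormSq (γ Cphi ϑ τ lam t : ℝ) (h : V3 → V3 → ℝ) : ℝ :=
  ∫ x : V3, wDnormSq γ Cphi ϑ τ lam t (h x)

/-- Plain `L²_x` norm squared of a scalar function of `x`. -/
def L2sqX (g : V3 → ℝ) : ℝ := ∫ x : V3, (g x) ^ 2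

/-- Plain `L²_{x,ξ}` norm squared. -/
def L2sqXV (h : V3 → V3 → ℝ) : ℝ := ∫ x : V3, ∫ ξ : V3, (h x ξ) ^ 2

/-- `‖∇_x g‖²` for scalar `g`. -/
def gradSqX (g : V3 → ℝ) : ℝ := ∫ x : V3, ∑ i : Fin 3, (pder i g x) ^ 2

/-- `‖∂^α u‖²` for a vector field `u`. -/
def fieldSq (α : Fin 3 → ℕ) (u : V3 → V3) : ℝ :=
  ∫ x : V3, ∑ i : Fin 3, (mder α (fun y => u y i) x) ^ 2

/-- `‖∇_x ∂^α u‖²` for a vector field `u`. -/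
def gradFieldSq (α : Fin 3 → ℕ) (u : V3 → V3) : ℝ :=
  ∫ x : V3, ∑ i : Fin 3, ∑ j : Fin 3, (pder i (mder α (fun y => u y j)) x) ^ 2

/-- The finite set of multi-indices of length at most `n`. -/
def midxLe (n : ℕ) : Finset (Fin 3 → ℕ) :=
  (Fintype.piFinset fun _ => Finset.range (n + 1)).filter fun a => mlen a ≤ n

/-- Pairs of multi-indices `(α,β)` with `|α|+|β| ≤ n`. -/
def pairIdx (n : ℕ) : Finset ((Fin 3 → ℕ) × (Fin 3 → ℕ)) :=
  (midxLe n ×ˢ midxLe n).filter fun p => mlen p.1 + mlen p.2 ≤ n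

/-- The box of multi-indices `α' ≤ α` (componentwise). -/
def boxLe (α : Fin 3 → ℕ) : Finset (Fin 3 → ℕ) :=
  Fintype.piFinset fun i => Finset.range (α i + 1)

/-! Macroscopic quantities. -/

/-- `a_±(x)`. -/
def aC (f : Bool → V3 → V3 → ℝ) (s : Bool) (x : V3) : ℝ := ∫ ξ : V3, sqmu ξ * f s x ξ

/-- `b_i(x)`. -/
def bC (f : Bool → V3 → V3 → ℝ) (i : Fin 3) (x : V3) : ℝ :=
  (1/2) * ∫ ξ : V3, ξ i * sqmu ξ * (f true x ξ + f false x ξ)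

/-- `c(x)`. -/
def cC (f : Bool → V3 → V3 → ℝ) (x : V3) : ℝ :=
  (1/12) * ∫ ξ : V3, (‖ξ‖ ^ 2 - 3) * sqmu ξ * (f true x ξ + f false x ξ)

/-- `a_±` of a pair of functions of `ξ` only. -/
def aP (f : Bool → V3 → ℝ) (s : Bool) : ℝ := ∫ ξ : V3, sqmu ξ * f s ξ

/-- `b_i` of a pair of functions of `ξ` only. -/
def bP (f : Bool → V3 → ℝ) (i : Fin 3) : ℝ :=
  (1/2) * ∫ ξ : V3, ξ i * sqmu ξ * (f true ξ + f false ξ)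

/-- `c` of a pair of functions of `ξ` only. -/
def cP (f : Bool → V3 → ℝ) : ℝ :=
  (1/12) * ∫ ξ : V3, (‖ξ‖ ^ 2 - 3) * sqmu ξ * (f true ξ + f false ξ)

/-- The macroscopic projection `P` on pairs of functions of `ξ`. -/
def Pproj (f : Bool → V3 → ℝ) (s : Bool) : V3 → ℝ := fun ξ =>
  aP f s * sqmu ξ + (∑ i : Fin 3, bP f i * ξ i * sqmu ξ) + cP f * (‖ξ‖ ^ 2 - 3) * sqmu ξ

/-- `(I − P) f` for pairs of functions of `(x,ξ)`. -/
def ImP (f : Bool → V3 → V3 → ℝ) (s : Bool) : V3 → V3 → ℝ :=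
  fun x ξ => f s x ξ - Pproj (fun s' => f s' x) s ξ

/-! Energy and dissipation functionals. -/

/-- The instantaneous energy functional `𝔈_{N,ℓ,λ}(t)`. -/
def EnF (γ ϑ lam : ℝ) (N : ℕ) (ℓ : ℝ) (f : Bool → V3 → V3 → ℝ) (Ef Bf : V3 → V3)
    (t : ℝ) : ℝ :=
  (∑ p ∈ pairIdx N, ∑ s : Bool,
      WnormSq γ ϑ ((mlen p.2 : ℝ) - ℓ) lam t (mderXV p.1 p.2 (f s)))
    + ∑ α ∈ midxLe N, (fieldSq α Ef + fieldSq α Bf)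

/-- The instantaneous dissipation functional `𝔇_{N,ℓ,λ}(t)`. -/
def DisF (γ Cphi ϑ lam : ℝ) (N : ℕ) (ℓ : ℝ) (f : Bool → V3 → V3 → ℝ) (Ef Bf : V3 → V3)
    (t : ℝ) : ℝ :=
  (∑ p ∈ pairIdx N, ∑ s : Bool,
      WDnormSq γ Cphi ϑ ((mlen p.2 : ℝ) - ℓ) lam t (mderXV p.1 p.2 (ImP f s)))
    + (∑ α ∈ midxLe (N - 1),
        (gradSqX (mder α (aC f true)) + gradSqX (mder α (aC f false))
          + (∑ i : Fin 3, gradSqX (mder α (bC f i))) + gradSqX (mder α (cC f))))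
    + L2sqX (fun x => aC f true x - aC f false x)
    + (∑ α ∈ midxLe (N - 1), fieldSq α Ef)
    + (∑ α ∈ (midxLe (N - 1)).filter fun a => 1 ≤ mlen a, fieldSq α Bf)
    + (lam / (1 + t) ^ (1 + ϑ)) *
        ∑ p ∈ pairIdx N, ∑ s : Bool,
          WnormSq γ ϑ ((mlen p.2 : ℝ) - ℓ) lam t
            (fun x ξ => jap ξ * mderXV p.1 p.2 (ImP f s) x ξ)

/-- `N₁ = (3/2) N₀`. -/
def N1 (N₀ : ℕ) : ℕ := 3 * N₀ / 2

/-- The quantity inside the supremum defining the norm `X(t)`. -/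
def Xexpr (γ ϑ lam ε₀ : ℝ) (N₀ ℓ₀ : ℕ) (f : ℝ → Bool → V3 → V3 → ℝ)
    (Ef Bf : ℝ → V3 → V3) (s : ℝ) : ℝ :=
  EnF γ ϑ 0 (N1 N₀) 0 (f s) (Ef s) (Bf s) s
    + (1 + s) ^ ((3:ℝ)/2) * EnF γ ϑ 0 (N1 N₀ - 2) 0 (f s) (Ef s) (Bf s) s
    + (1 + s) ^ (-(1 + ε₀)/2) * EnF γ ϑ lam (N1 N₀) ((ℓ₀ : ℝ)/2) (f s) (Ef s) (Bf s) s
    + EnF γ ϑ lam (N1 N₀ - 1) ((ℓ₀ : ℝ)/2) (f s) (Ef s) (Bf s) s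
    + (1 + s) ^ ((3:ℝ)/2) * EnF γ ϑ lam (N1 N₀ - 3) ((ℓ₀ : ℝ)/2 - 1) (f s) (Ef s) (Bf s) s
    + EnF γ ϑ lam N₀ (ℓ₀ : ℝ) (f s) (Ef s) (Bf s) s
    + (1 + s) ^ ((3:ℝ)/2) * EnF γ ϑ lam N₀ ((ℓ₀ : ℝ) - 1) (f s) (Ef s) (Bf s) s
    + (1 + s) ^ (2 * (1 + ϑ)) *
        ∑ α ∈ (midxLe N₀).filter (fun a => 1 ≤ mlen a),
          (fieldSq α (Ef s) + fieldSq α (Bf s))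

/-- The temporal energy norm `X(t)`. -/
def Xfun (γ ϑ lam ε₀ : ℝ) (N₀ ℓ₀ : ℕ) (f : ℝ → Bool → V3 → V3 → ℝ)
    (Ef Bf : ℝ → V3 → V3) (t : ℝ) : ℝ :=
  sSup (Xexpr γ ϑ lam ε₀ N₀ ℓ₀ f Ef Bf '' Set.Icc 0 t)

/-- The `Z₁` norm. -/
def Z1norm (g : V3 → V3 → ℝ) : ℝ :=
  Real.sqrt (∫ ξ : V3, (∫ x : V3, |g x ξ|) ^ 2)

/-- The size `Y₀` of the initial data. -/
def Y0 (γ ϑ lam ℓ₂ : ℝ) (N₀ ℓ₀ : ℕ) (f₀ : Bool → V3 → V3 → ℝ) (E₀ B₀ : V3 → V3) : ℝ :=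
  (∑ p ∈ pairIdx N₀, ∑ s : Bool,
      Real.sqrt (WnormSq γ ϑ ((mlen p.2 : ℝ) - (ℓ₀ : ℝ)) lam 0 (mderXV p.1 p.2 (f₀ s))))
    + (∑ p ∈ pairIdx (N1 N₀), ∑ s : Bool,
        Real.sqrt (WnormSq γ ϑ ((mlen p.2 : ℝ) - (ℓ₀ : ℝ)/2) lam 0 (mderXV p.1 p.2 (f₀ s))))
    + (∑ α ∈ midxLe (N1 N₀), Real.sqrt (fieldSq α E₀ + fieldSq α B₀))
    + (∫ x : V3, ‖E₀ x‖) + (∫ x : V3, ‖B₀ x‖)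
    + ∑ s : Bool, Z1norm (fun x ξ => jap ξ ^ (-(γ + 2) * ℓ₂) * f₀ s x ξ)

/-! Regularity and decay classes, and the notion of solution. -/

/-- Rapid (Gaussian-dominated) decay in `(x,ξ)` of a function and all its derivatives. -/
def RapidGauss (h : V3 → V3 → ℝ) : Prop :=
  ∀ α β : Fin 3 → ℕ, ∃ g : SchwartzMap (V3 × V3) ℝ,
    ∀ x ξ, g (x, ξ) = Real.exp (‖ξ‖ ^ 2 / 8) * mderXV α β h x ξ

/-- A vector field which is (the restriction of) a Schwartz function. -/
def SchwartzField (u : V3 → V3) : Prop := ∃ g : SchwartzMap V3 V3, ∀ x, g x = u x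

/-- `t ∈ [0,T)` for `T ∈ (0,∞]`. -/
def InT (T : ℝ≥0∞) (t : ℝ) : Prop := 0 ≤ t ∧ ENNReal.ofReal t < T

/-- Classical smooth rapidly decaying solution of the perturbed
Vlasov–Maxwell–Landau system on `[0,T)`. -/
structure VMLSol (γ Cphi : ℝ) (T : ℝ≥0∞) (f : ℝ → Bool → V3 → V3 → ℝ)
    (E B : ℝ → V3 → V3) : Prop where
  smooth_f : ∀ s, ContDiff ℝ (⊤ : ℕ∞) (fun p : ℝ × V3 × V3 => f p.1 s p.2.1 p.2.2)
  smooth_E : ContDiff ℝ (⊤ : ℕ∞) (fun p : ℝ × V3 => E p.1 p.2)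
  smooth_B : ContDiff ℝ (⊤ : ℕ∞) (fun p : ℝ × V3 => B p.1 p.2)
  decay_f : ∀ t, InT T t → ∀ s, RapidGauss (f t s)
  decay_E : ∀ t, InT T t → SchwartzField (E t)
  decay_B : ∀ t, InT T t → SchwartzField (B t)
  vlasov : ∀ t, InT T t → ∀ s x ξ,
    deriv (fun t' => f t' s x ξ) t
      + (∑ i : Fin 3, ξ i * pderX i (f t s) x ξ)
      + sgn s * (∑ i : Fin 3,
          (E t x i + crossF (fun i' => ξ i') (fun i' => B t x i') i) * pder i (f t s x) ξ)
      - sgn s * (∑ i : Fin 3, E t x i * ξ i) * sqmu ξ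
      + Lop γ Cphi (fun s' => f t s' x) s ξ
    = (1/2) * sgn s * (∑ i : Fin 3, E t x i * ξ i) * f t s x ξ
        + Gam γ Cphi (fun s' => f t s' x) (fun s' => f t s' x) s ξ
  ampere : ∀ t, InT T t → ∀ x (i : Fin 3),
    deriv (fun t' => E t' x i) t - curlF (B t) x i
      = - ∫ ξ : V3, ξ i * sqmu ξ * (f t true x ξ - f t false x ξ)
  faraday : ∀ t, InT T t → ∀ x (i : Fin 3),
    deriv (fun t' => B t' x i) t + curlF (E t) x i = 0
  gaussE : ∀ t, InT T t → ∀ x,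
    divF (E t) x = ∫ ξ : V3, sqmu ξ * (f t true x ξ - f t false x ξ)
  gaussB : ∀ t, InT T t → ∀ x, divF (B t) x = 0

/-- Classical smooth rapidly decaying solution of the linearized homogeneous
Vlasov–Maxwell–Landau system on `[0,∞)`. -/
structure LinSol (γ Cphi : ℝ) (f : ℝ → Bool → V3 → V3 → ℝ) (E B : ℝ → V3 → V3) : Prop where
  smooth_f : ∀ s, ContDiff ℝ (⊤ : ℕ∞) (fun p : ℝ × V3 × V3 => f p.1 s p.2.1 p.2.2)
  smooth_E : ContDiff ℝ (⊤ : ℕ∞) (fun p : ℝ × V3 => E p.1 p.2)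
  smooth_B : ContDiff ℝ (⊤ : ℕ∞) (fun p : ℝ × V3 => B p.1 p.2)
  decay_f : ∀ t, 0 ≤ t → ∀ s, RapidGauss (f t s)
  decay_E : ∀ t, 0 ≤ t → SchwartzField (E t)
  decay_B : ∀ t, 0 ≤ t → SchwartzField (B t)
  vlasov : ∀ t, 0 ≤ t → ∀ s x ξ,
    deriv (fun t' => f t' s x ξ) t
      + (∑ i : Fin 3, ξ i * pderX i (f t s) x ξ)
      - sgn s * (∑ i : Fin 3, E t x i * ξ i) * sqmu ξ
      + Lop γ Cphi (fun s' => f t s' x) s ξ = 0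
  ampere : ∀ t, 0 ≤ t → ∀ x (i : Fin 3),
    deriv (fun t' => E t' x i) t - curlF (B t) x i
      = - ∫ ξ : V3, ξ i * sqmu ξ * (f t true x ξ - f t false x ξ)
  faraday : ∀ t, 0 ≤ t → ∀ x (i : Fin 3),
    deriv (fun t' => B t' x i) t + curlF (E t) x i = 0
  gaussE : ∀ t, 0 ≤ t → ∀ x,
    divF (E t) x = ∫ ξ : V3, sqmu ξ * (f t true x ξ - f t false x ξ)
  gaussB : ∀ t, 0 ≤ t → ∀ x, divF (B t) x = 0

/-- Fractional Laplacian-type Fourier multiplier `|∇_x|^s`. -/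
def fracLap (s : ℝ) (g : V3 → ℝ) : V3 → ℝ := fun x =>
  (FourierTransformInv.fourierInv
    (fun k : V3 => ((‖k‖ ^ s : ℝ) : ℂ) * FourierTransform.fourier (fun y : V3 => (g y : ℂ)) k)
    x).re

end VML

namespace EMaux
open VML

def nsq (ξ : V3) : ℝ := ∑ i : Fin 3, ξ i * ξ i
def vv (j : Fin 3) : V3 := EuclideanSpace.single j (1:ℝ)
def Nd (ξ : V3) : V3 →L[ℝ] ℝ := ∑ i : Fin 3, (2 * ξ i) • (EuclideanSpace.proj i : V3 →L[ℝ] ℝ)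

lemma nsq_eq (ξ : V3) : ‖ξ‖ ^ 2 = nsq ξ := by
  rw [EuclideanSpace.norm_eq, Real.sq_sqrt (by positivity)]
  simp [nsq, sq]

lemma nsq_nonneg (ξ : V3) : 0 ≤ nsq ξ := Finset.sum_nonneg fun i _ => mul_self_nonneg _

lemma hasFDerivAt_nsq (ξ : V3) : HasFDerivAt nsq (Nd ξ) ξ := by
  have h : ∀ i : Fin 3, HasFDerivAt (fun ζ : V3 => ζ i * ζ i)
      ((2 * ξ i) • (EuclideanSpace.proj i : V3 →L[ℝ] ℝ)) ξ := by
    intro i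
    have hp : HasFDerivAt (fun ζ : V3 => ζ i) (EuclideanSpace.proj i : V3 →L[ℝ] ℝ) ξ :=
      (EuclideanSpace.proj i : V3 →L[ℝ] ℝ).hasFDerivAt
    refine (hp.mul hp).congr_fderiv ?_
    ext w; simp; ring
  exact HasFDerivAt.fun_sum (fun i _ => h i)

lemma Nd_apply (ξ : V3) (j : Fin 3) : Nd ξ (vv j) = 2 * ξ j := by
  simp [Nd, vv, EuclideanSpace.single_apply]

lemma continuous_nsq : Continuous nsq := by
  unfold nsq; fun_prop


lemma sqmu_eq (ξ : V3) :
    sqmu ξ = (2 * Real.pi) ^ (-(3:ℝ)/4) * Real.exp (-nsq ξ / 4) := by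
  have h2π : (0:ℝ) ≤ 2 * Real.pi := by positivity
  have he : Real.exp (-‖ξ‖ ^ 2 / 2) = Real.exp (-nsq ξ / 4) ^ 2 := by
    rw [← Real.exp_nat_mul]; rw [nsq_eq]; ring_nf
  rw [sqmu, mu, he, Real.sqrt_mul (by positivity), Real.sqrt_sq (Real.exp_nonneg _)]
  congr 1
  rw [Real.sqrt_eq_rpow, ← Real.rpow_mul h2π]
  norm_num

lemma continuous_sqmu : Continuous sqmu := by
  have : sqmu = fun ξ => (2 * Real.pi) ^ (-(3:ℝ)/4) * Real.exp (-nsq ξ / 4) :=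
    funext sqmu_eq
  rw [this]
  exact continuous_const.mul (Real.continuous_exp.comp (by unfold nsq; fun_prop))

lemma hasFDerivAt_sqmu (ξ : V3) :
    HasFDerivAt sqmu ((-(sqmu ξ) / 4) • Nd ξ) ξ := by
  have h1 : HasFDerivAt (fun ζ : V3 => (-(1:ℝ)/4) * nsq ζ) ((-(1:ℝ)/4) • Nd ξ) ξ :=
    (hasFDerivAt_nsq ξ).const_mul _
  have h2 := h1.exp
  have h3 := h2.const_mul ((2 * Real.pi) ^ (-(3:ℝ)/4))
  have hfun : (fun ζ : V3 => (2 * Real.pi) ^ (-(3:ℝ)/4) * Real.exp ((-(1:ℝ)/4) * nsq ζ))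
      = sqmu := by
    funext ζ; rw [sqmu_eq]; ring_nf
  rw [hfun] at h3
  refine h3.congr_fderiv ?_
  ext w
  simp [sqmu_eq]
  ring

variable (E B : V3)

def crx (j : Fin 3) (ξ : V3) : ℝ := ξ (j+1) * B (j+2) - ξ (j+2) * B (j+1)
def crxD (j : Fin 3) : V3 →L[ℝ] ℝ :=
  B (j+2) • (EuclideanSpace.proj (j+1) : V3 →L[ℝ] ℝ)
    - B (j+1) • (EuclideanSpace.proj (j+2) : V3 →L[ℝ] ℝ)

lemma hasFDerivAt_crx (j : Fin 3) (ξ : V3) : HasFDerivAt (crx B j) (crxD B j) ξ := by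
  have h1 : HasFDerivAt (fun ζ : V3 => ζ (j+1)) (EuclideanSpace.proj (j+1) : V3 →L[ℝ] ℝ) ξ :=
    (EuclideanSpace.proj (j+1) : V3 →L[ℝ] ℝ).hasFDerivAt
  have h2 : HasFDerivAt (fun ζ : V3 => ζ (j+2)) (EuclideanSpace.proj (j+2) : V3 →L[ℝ] ℝ) ξ :=
    (EuclideanSpace.proj (j+2) : V3 →L[ℝ] ℝ).hasFDerivAt
  have h := (h1.mul_const (B (j+2))).sub (h2.mul_const (B (j+1)))
  have heq : crx B j = fun ζ : V3 => ζ (j+1) * B (j+2) - ζ (j+2) * B (j+1) := rfl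
  rw [heq]
  exact h

lemma crxD_apply_self (j : Fin 3) : crxD B j (vv j) = 0 := by
  have h : ∀ j : Fin 3, j + 1 ≠ j ∧ j + 2 ≠ j := by decide
  simp [crxD, vv, EuclideanSpace.single_apply, (h j).1, (h j).2]

def Afun (j : Fin 3) (ξ : V3) : ℝ := E j + crx B j ξ
def Gfun (j : Fin 3) (ξ : V3) : ℝ := (nsq ξ - 3) * Afun E B j ξ * sqmu ξ
def Dfun (j : Fin 3) (ξ : V3) : ℝ :=
  (2 * ξ j - (nsq ξ - 3) * ξ j / 2) * Afun E B j ξ * sqmu ξ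

lemma hasFDerivAt_Gfun (j : Fin 3) (ξ : V3) :
    HasFDerivAt (Gfun E B j)
      ((Afun E B j ξ * sqmu ξ) • Nd ξ + ((nsq ξ - 3) * sqmu ξ) • crxD B j
        + ((nsq ξ - 3) * Afun E B j ξ * (-(sqmu ξ)/4)) • Nd ξ) ξ := by
  have hA : HasFDerivAt (Afun E B j) (crxD B j) ξ := by
    have := (hasFDerivAt_const (E j) ξ).add (hasFDerivAt_crx B j ξ)
    rw [zero_add] at this
    exact this
  have hn : HasFDerivAt (fun ζ : V3 => nsq ζ - 3) (Nd ξ) ξ :=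
    (hasFDerivAt_nsq ξ).sub_const 3
  have hP := hn.mul hA
  have hG := hP.mul (hasFDerivAt_sqmu ξ)
  refine hG.congr_fderiv ?_
  ext w
  simp [Afun]
  ring

lemma differentiable_Gfun (j : Fin 3) : Differentiable ℝ (Gfun E B j) :=
  fun ξ => (hasFDerivAt_Gfun E B j ξ).differentiableAt

lemma fderiv_Gfun_apply (j : Fin 3) (ξ : V3) :
    fderiv ℝ (Gfun E B j) ξ (vv j) = Dfun E B j ξ := by
  rw [(hasFDerivAt_Gfun E B j ξ).fderiv]
  simp [Nd_apply, crxD_apply_self, Dfun]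
  ring

lemma gauss8 : Integrable (fun ξ : V3 => Real.exp (-‖ξ‖^2/8)) := by
  have h := GaussianFourier.integrable_cexp_neg_mul_sq_norm_add
    (V := V3) (b := (1/8 : ℂ)) (by norm_num) 0 0
  have h2 := h.norm
  apply h2.congr' ?_ ?_
  · exact (Real.continuous_exp.comp (by fun_prop)).aestronglyMeasurable
  · filter_upwards with ξ
    simp [Complex.norm_exp, ← Complex.ofReal_pow]
    ring_nf

lemma poly_exp_bound (n : ℝ) (hn : 0 ≤ n) :
    (1 + n)^3 * Real.exp (-n/4) ≤ 24^3 * Real.exp (-n/8) := by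
  have h1 : 1 + n ≤ 24 * Real.exp (n/24) := by
    have := Real.add_one_le_exp (n/24)
    nlinarith [Real.exp_pos (n/24)]
  have h2 : (1 + n)^3 ≤ (24 * Real.exp (n/24))^3 := by
    apply pow_le_pow_left₀ (by linarith) h1
  have h3 : (24 * Real.exp (n/24))^3 = 24^3 * Real.exp (n/8) := by
    have h5 : ((3:ℕ):ℝ) * (n/24) = n/8 := by push_cast; ring
    rw [mul_pow, ← Real.exp_nat_mul, h5]
  have h4 : Real.exp (n/8) * Real.exp (-n/4) = Real.exp (-n/8) := by
    rw [← Real.exp_add]; ring_nf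
  calc (1 + n)^3 * Real.exp (-n/4) ≤ 24^3 * Real.exp (n/8) * Real.exp (-n/4) := by
        apply mul_le_mul_of_nonneg_right (h3 ▸ h2) (Real.exp_nonneg _)
    _ = 24^3 * Real.exp (-n/8) := by rw [mul_assoc, h4]

lemma intg (p : V3 → ℝ) (hp : Continuous p) (K : ℝ)
    (hpb : ∀ ξ, |p ξ| ≤ K * (1 + nsq ξ)^3) (g : SchwartzMap V3 ℝ) :
    Integrable (fun ξ => p ξ * sqmu ξ * g ξ) := by
  have hK : 0 ≤ K := by
    have := (abs_nonneg (p 0)).trans (hpb 0)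
    have h0 : nsq (0 : V3) = 0 := by simp [nsq]
    rw [h0] at this; linarith
  obtain ⟨M, hMpos, hM⟩ := g.decay 0 0
  have hM0 : 0 ≤ M := hMpos.le
  have hMb : ∀ ξ, |g ξ| ≤ M := by
    intro ξ
    have := hM ξ
    simpa [norm_iteratedFDeriv_zero, Real.norm_eq_abs] using this
  set c0 : ℝ := (2 * Real.pi) ^ (-(3:ℝ)/4) with hc0
  have hc0p : 0 < c0 := by rw [hc0]; positivity
  apply Integrable.mono' ((gauss8.const_mul (K * c0 * M * 24^3)))
    ((hp.mul continuous_sqmu).mul g.continuous).aestronglyMeasurable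
  filter_upwards with ξ
  have hsq : sqmu ξ = c0 * Real.exp (-nsq ξ/4) := sqmu_eq ξ
  have hb1 : ‖p ξ * sqmu ξ * g ξ‖ ≤ (K * (1 + nsq ξ)^3) * (c0 * Real.exp (-nsq ξ/4)) * M := by
    rw [Real.norm_eq_abs, abs_mul, abs_mul, hsq]
    have h2 : |c0 * Real.exp (-nsq ξ/4)| = c0 * Real.exp (-nsq ξ/4) :=
      abs_of_nonneg (mul_nonneg hc0p.le (Real.exp_nonneg _))
    rw [h2]
    have hce : 0 ≤ c0 * Real.exp (-nsq ξ/4) := mul_nonneg hc0p.le (Real.exp_nonneg _)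
    apply mul_le_mul (mul_le_mul_of_nonneg_right (hpb ξ) hce) (hMb ξ)
      (abs_nonneg _) (mul_nonneg (mul_nonneg hK (pow_nonneg (by linarith [nsq_nonneg ξ]) 3)) hce)
  apply hb1.trans
  have := poly_exp_bound (nsq ξ) (nsq_nonneg ξ)
  have hfinal : (K * (1 + nsq ξ)^3) * (c0 * Real.exp (-nsq ξ/4)) * M
      ≤ K * c0 * M * 24^3 * Real.exp (-nsq ξ/8) := by
    nlinarith [Real.exp_nonneg (-nsq ξ/8), Real.exp_nonneg (-nsq ξ/4),
      mul_le_mul_of_nonneg_left this (mul_nonneg (mul_nonneg hK hc0p.le) hM0)]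
  apply hfinal.trans
  rw [← nsq_eq]

lemma abs_coord (ξ : V3) (i : Fin 3) : |ξ i| ≤ 1 + nsq ξ := by
  have h : ξ i * ξ i ≤ nsq ξ :=
    Finset.single_le_sum (f := fun k => ξ k * ξ k) (fun k _ => mul_self_nonneg _)
      (Finset.mem_univ i)
  nlinarith [sq_nonneg (|ξ i| - 1), sq_abs (ξ i), nsq_nonneg ξ, abs_nonneg (ξ i)]

lemma abs_nsq3 (ξ : V3) : |nsq ξ - 3| ≤ 3 * (1 + nsq ξ) := by
  rw [abs_le]; constructor <;> nlinarith [nsq_nonneg ξ]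

lemma abs_mul_le {a b Ka Kb : ℝ} (ha : |a| ≤ Ka) (hb : |b| ≤ Kb) : |a * b| ≤ Ka * Kb := by
  rw [abs_mul]
  exact mul_le_mul ha hb (abs_nonneg _) ((abs_nonneg a).trans ha)

lemma abs_Afun (j : Fin 3) (ξ : V3) :
    |Afun E B j ξ| ≤ (|E j| + |B (j+1)| + |B (j+2)|) * (1 + nsq ξ) := by
  have h1 := abs_coord ξ (j+1)
  have h2 := abs_coord ξ (j+2)
  have ht : (1:ℝ) ≤ 1 + nsq ξ := by linarith [nsq_nonneg ξ]
  have hc : |crx B j ξ| ≤ (1 + nsq ξ) * |B (j+2)| + (1 + nsq ξ) * |B (j+1)| := by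
    calc |crx B j ξ| ≤ |ξ (j+1) * B (j+2)| + |ξ (j+2) * B (j+1)| := abs_sub _ _
      _ ≤ (1 + nsq ξ) * |B (j+2)| + (1 + nsq ξ) * |B (j+1)| := by
          rw [abs_mul, abs_mul]
          exact add_le_add (mul_le_mul_of_nonneg_right h1 (abs_nonneg _))
            (mul_le_mul_of_nonneg_right h2 (abs_nonneg _))
  calc |Afun E B j ξ| ≤ |E j| + |crx B j ξ| := abs_add_le _ _
    _ ≤ (|E j| + |B (j+1)| + |B (j+2)|) * (1 + nsq ξ) := by
        nlinarith [abs_nonneg (E j), abs_nonneg (B (j+1)), abs_nonneg (B (j+2))]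

lemma abs_p1 (j : Fin 3) (ξ : V3) :
    |(nsq ξ - 3) * Afun E B j ξ| ≤
      (3 * (|E j| + |B (j+1)| + |B (j+2)|)) * (1 + nsq ξ)^3 := by
  have h := abs_mul_le (abs_nsq3 ξ) (abs_Afun E B j ξ)
  have ht : (1:ℝ) ≤ 1 + nsq ξ := by linarith [nsq_nonneg ξ]
  have hC : (0:ℝ) ≤ |E j| + |B (j+1)| + |B (j+2)| := by positivity
  have ht2 : (1 + nsq ξ)^2 ≤ (1 + nsq ξ)^3 := pow_le_pow_right₀ ht (by norm_num)
  nlinarith [mul_le_mul_of_nonneg_left ht2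
    (by positivity : (0:ℝ) ≤ 3 * (|E j| + |B (j+1)| + |B (j+2)|)), sq_nonneg (1 + nsq ξ)]

lemma abs_p3 (j : Fin 3) (ξ : V3) :
    |(2 * ξ j - (nsq ξ - 3) * ξ j / 2) * Afun E B j ξ| ≤
      (4 * (|E j| + |B (j+1)| + |B (j+2)|)) * (1 + nsq ξ)^3 := by
  have ht : (1:ℝ) ≤ 1 + nsq ξ := by linarith [nsq_nonneg ξ]
  have hC : (0:ℝ) ≤ |E j| + |B (j+1)| + |B (j+2)| := by positivity
  have hj := abs_coord ξ j
  have h1 : |2 * ξ j - (nsq ξ - 3) * ξ j / 2| ≤ 4 * (1 + nsq ξ)^2 := by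
    have ha : |2 * ξ j| ≤ 2 * (1 + nsq ξ) := by
      rw [abs_mul]; norm_num; linarith
    have hb : |(nsq ξ - 3) * ξ j / 2| ≤ (3 * (1 + nsq ξ)) * (1 + nsq ξ) / 2 := by
      rw [abs_div]
      have := abs_mul_le (abs_nsq3 ξ) hj
      norm_num
      linarith [abs_mul (nsq ξ - 3) (ξ j)]
    calc |2 * ξ j - (nsq ξ - 3) * ξ j / 2| ≤ |2 * ξ j| + |(nsq ξ - 3) * ξ j / 2| :=
          abs_sub _ _
      _ ≤ 4 * (1 + nsq ξ)^2 := by nlinarith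
  have h := abs_mul_le h1 (abs_Afun E B j ξ)
  nlinarith [pow_nonneg (le_trans zero_le_one ht) 2]

lemma abs_p4 (ξ : V3) :
    |(nsq ξ - 3) * ((1/2) * ∑ i : Fin 3, E i * ξ i)| ≤
      (2 * (|E 0| + |E 1| + |E 2|)) * (1 + nsq ξ)^3 := by
  have ht : (1:ℝ) ≤ 1 + nsq ξ := by linarith [nsq_nonneg ξ]
  have hC : (0:ℝ) ≤ |E 0| + |E 1| + |E 2| := by positivity
  have hS : |∑ i : Fin 3, E i * ξ i| ≤ (|E 0| + |E 1| + |E 2|) * (1 + nsq ξ) := by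
    rw [Fin.sum_univ_three]
    have h0 := abs_mul_le (le_refl |E 0|) (abs_coord ξ 0)
    have h1 := abs_mul_le (le_refl |E 1|) (abs_coord ξ 1)
    have h2 := abs_mul_le (le_refl |E 2|) (abs_coord ξ 2)
    calc |E 0 * ξ 0 + E 1 * ξ 1 + E 2 * ξ 2|
        ≤ |E 0 * ξ 0| + |E 1 * ξ 1| + |E 2 * ξ 2| := by
          exact (abs_add_le _ _).trans (add_le_add_left (abs_add_le _ _) _)
      _ ≤ (|E 0| + |E 1| + |E 2|) * (1 + nsq ξ) := by nlinarith
  have h := abs_mul_le (abs_nsq3 ξ) hS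
  have h2 : |(nsq ξ - 3) * ((1/2) * ∑ i : Fin 3, E i * ξ i)|
      = |nsq ξ - 3| * ((1/2) * |∑ i : Fin 3, E i * ξ i|) := by
    rw [abs_mul, abs_mul]
    norm_num
  have ht2 : (1 + nsq ξ)^2 ≤ (1 + nsq ξ)^3 := pow_le_pow_right₀ ht (by norm_num)
  nlinarith [abs_nonneg (nsq ξ - 3), abs_nonneg (∑ i : Fin 3, E i * ξ i),
    abs_mul (nsq ξ - 3) (∑ i : Fin 3, E i * ξ i),
    sq_nonneg (1 + nsq ξ), mul_le_mul_of_nonneg_left ht2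
      (by positivity : (0:ℝ) ≤ 2 * (|E 0| + |E 1| + |E 2|))]

lemma abs_p5 (i : Fin 3) (ξ : V3) : |ξ i| ≤ 1 * (1 + nsq ξ)^3 := by
  have ht : (1:ℝ) ≤ 1 + nsq ξ := by linarith [nsq_nonneg ξ]
  have := abs_coord ξ i
  nlinarith [sq_nonneg (1 + nsq ξ)]

lemma cont_p1 (j : Fin 3) : Continuous (fun ξ : V3 => (nsq ξ - 3) * Afun E B j ξ) := by
  unfold Afun crx nsq; fun_prop

lemma cont_p3 (j : Fin 3) :
    Continuous (fun ξ : V3 => (2 * ξ j - (nsq ξ - 3) * ξ j / 2) * Afun E B j ξ) := by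
  unfold Afun crx nsq; fun_prop

lemma cont_p4 : Continuous (fun ξ : V3 => (nsq ξ - 3) * ((1/2) * ∑ i : Fin 3, E i * ξ i)) := by
  unfold nsq; fun_prop

variable (f : SchwartzMap V3 ℝ)

lemma int_Gf (j : Fin 3) : Integrable (fun ξ : V3 => Gfun E B j ξ * f ξ) := by
  have := intg (fun ξ : V3 => (nsq ξ - 3) * Afun E B j ξ) (cont_p1 E B j)
    (3 * (|E j| + |B (j+1)| + |B (j+2)|)) (abs_p1 E B j) f
  apply this.congr
  filter_upwards with ξ
  simp only [Gfun]

lemma int_Gdf (j : Fin 3) :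
    Integrable (fun ξ : V3 => Gfun E B j ξ * fderiv ℝ (⇑f) ξ (vv j)) := by
  have := intg (fun ξ : V3 => (nsq ξ - 3) * Afun E B j ξ) (cont_p1 E B j)
    (3 * (|E j| + |B (j+1)| + |B (j+2)|)) (abs_p1 E B j) (LineDeriv.lineDerivOp (vv j) f)
  apply this.congr
  filter_upwards with ξ
  simp only [Gfun, SchwartzMap.lineDerivOp_apply_eq_fderiv]

lemma int_Df (j : Fin 3) : Integrable (fun ξ : V3 => Dfun E B j ξ * f ξ) := by
  have := intg (fun ξ : V3 => (2 * ξ j - (nsq ξ - 3) * ξ j / 2) * Afun E B j ξ)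
    (cont_p3 E B j) (4 * (|E j| + |B (j+1)| + |B (j+2)|)) (abs_p3 E B j) f
  apply this.congr
  filter_upwards with ξ
  simp only [Dfun]

lemma int_X : Integrable
    (fun ξ : V3 => ((nsq ξ - 3) * ((1/2) * ∑ i : Fin 3, E i * ξ i)) * sqmu ξ * f ξ) :=
  intg _ (cont_p4 E) (2 * (|E 0| + |E 1| + |E 2|)) (abs_p4 E) f

lemma int_coord (i : Fin 3) : Integrable (fun ξ : V3 => ξ i * sqmu ξ * f ξ) :=
  intg (fun ξ : V3 => ξ i) (by fun_prop) 1 (abs_p5 i) f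

lemma ibp (j : Fin 3) :
    ∫ ξ : V3, Gfun E B j ξ * fderiv ℝ (⇑f) ξ (vv j)
      = - ∫ ξ : V3, Dfun E B j ξ * f ξ := by
  have h := integral_mul_fderiv_eq_neg_fderiv_mul_of_integrable
    (f := Gfun E B j) (g := ⇑f) (v := vv j) (μ := volume)
    ?_ ?_ ?_ (fun x _ => differentiable_Gfun E B j x) (fun x _ => f.differentiable x)
  · rw [h]
    congr 1
    apply integral_congr_ae
    filter_upwards with ξ
    rw [fderiv_Gfun_apply]
  · apply (int_Df E B f j).congr
    filter_upwards with ξ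
    rw [fderiv_Gfun_apply]
  · exact int_Gdf E B f j
  · exact int_Gf E B f j


lemma crossF_eq (ξ : V3) (j : Fin 3) :
    crossF (fun i' => ξ i') (fun i' => B i') j = crx B j ξ := by
  fin_cases j <;> simp [crossF, crx] <;> rfl

lemma pt1 (ξ : V3) :
    (‖ξ‖ ^ 2 - 3) * sqmu ξ * ((1/2) * (∑ j : Fin 3, E j * ξ j) * f ξ
        - ∑ j : Fin 3, (E j + crossF (fun i' => ξ i') (fun i' => B i') j) * pder j (⇑f) ξ)
      = ((nsq ξ - 3) * ((1/2) * ∑ j : Fin 3, E j * ξ j)) * sqmu ξ * f ξ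
        - ∑ j : Fin 3, Gfun E B j ξ * fderiv ℝ (⇑f) ξ (vv j) := by
  rw [nsq_eq]
  simp only [crossF_eq, Gfun, Afun, pder, vv]
  rw [mul_sub]
  congr 1
  · ring
  · rw [Finset.mul_sum]
    exact Finset.sum_congr rfl fun j _ => by ring

lemma pt2 (ξ : V3) :
    ((nsq ξ - 3) * ((1/2) * ∑ j : Fin 3, E j * ξ j)) * sqmu ξ * f ξ
        + ∑ j : Fin 3, Dfun E B j ξ * f ξ
      = ∑ i : Fin 3, (2 * E i) * (ξ i * sqmu ξ * f ξ) := by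
  simp only [Dfun, Afun, crx, Fin.sum_univ_three]
  have e1 : ((0:Fin 3)+1) = 1 := rfl
  have e2 : ((0:Fin 3)+2) = 2 := rfl
  have e3 : ((1:Fin 3)+1) = 2 := rfl
  have e4 : ((1:Fin 3)+2) = 0 := rfl
  have e5 : ((2:Fin 3)+1) = 0 := rfl
  have e6 : ((2:Fin 3)+2) = 1 := rfl
  rw [e1, e2, e3, e4, e5, e6]
  ring

theorem main :
    (1/6) * ∫ ξ : V3, (‖ξ‖ ^ 2 - 3) * sqmu ξ * ((1/2) * (∑ j : Fin 3, E j * ξ j) * f ξ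
        - ∑ j : Fin 3, (E j + crossF (fun i' => ξ i') (fun i' => B i') j) * pder j (⇑f) ξ)
      = (1/3) * ∑ i : Fin 3, E i * ∫ ξ : V3, ξ i * sqmu ξ * f ξ := by
  have h1 : ∫ ξ : V3, (‖ξ‖ ^ 2 - 3) * sqmu ξ * ((1/2) * (∑ j : Fin 3, E j * ξ j) * f ξ
        - ∑ j : Fin 3, (E j + crossF (fun i' => ξ i') (fun i' => B i') j) * pder j (⇑f) ξ)
      = (∫ ξ : V3, ((nsq ξ - 3) * ((1/2) * ∑ j : Fin 3, E j * ξ j)) * sqmu ξ * f ξ)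
          - ∑ j : Fin 3, ∫ ξ : V3, Gfun E B j ξ * fderiv ℝ (⇑f) ξ (vv j) := by
    rw [integral_congr_ae (Filter.Eventually.of_forall (pt1 E B f))]
    rw [integral_sub (int_X E f) (integrable_finset_sum _ fun j _ => int_Gdf E B f j)]
    rw [integral_finset_sum _ fun j _ => int_Gdf E B f j]
  rw [h1]
  have h2 : ∀ j : Fin 3, ∫ ξ : V3, Gfun E B j ξ * fderiv ℝ (⇑f) ξ (vv j)
      = - ∫ ξ : V3, Dfun E B j ξ * f ξ := ibp E B f
  rw [Finset.sum_congr rfl fun j _ => h2 j]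
  rw [Finset.sum_neg_distrib, sub_neg_eq_add]
  rw [← integral_finset_sum _ fun j _ => int_Df E B f j]
  rw [← integral_add (int_X E f) (integrable_finset_sum _ fun j _ => int_Df E B f j)]
  rw [integral_congr_ae (Filter.Eventually.of_forall (pt2 E B f))]
  rw [integral_finset_sum _ fun i _ => (int_coord f i).const_mul (2 * E i)]
  rw [Finset.mul_sum, Finset.mul_sum]
  apply Finset.sum_congr rfl
  intro i _
  rw [integral_const_mul]
  ring

end EMaux

open VML in
/-- Energy-moment identity for the Lorentz-force source. -/
theorem energy_moment_lorentz_source (E B : V3) (f : SchwartzMap V3 ℝ) :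
    (1/6) * ∫ ξ : V3, (‖ξ‖ ^ 2 - 3) * sqmu ξ * ((1/2) * (∑ j : Fin 3, E j * ξ j) * f ξ
        - ∑ j : Fin 3, (E j + crossF (fun i' => ξ i') (fun i' => B i') j) * pder j ⇑f ξ)
      = (1/3) * ∑ i : Fin 3, E i * ∫ ξ : V3, ξ i * sqmu ξ * f ξ := by
  exact EMaux.main E B f
end
end

section
/- Frequency-space decay estimates used in the linearized analysis: (i) For all reals m ≥ 0, ε ∈ (0,1] and J > m + 3/2 there is a constant C > 0 such that for all t ≥ 0: ∫_{{k ∈ ℝ³ : |k| ≤ 1}} |k|^{2m} (1 + (ε/4)|k|² t)^{−J} dk ≤ C (1+t)^{−(m + 3/2)}. (ii) For all reals ε ∈ (0,1] and J ≥ j ≥ 0 there is a constant C > 0 such that for all t ≥ 0: sup_{{k ∈ ℝ³ : |k| ≥ 1}} (1 + εt/(4|k|²))^{−J} |k|^{−2j} ≤ C (1+t)^{−j}. -/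
noncomputable section

open MeasureTheory
open scoped ENNReal BigOperators

set_option maxHeartbeats 2000000 in
open VML in
/-- Frequency-space decay estimates used in the linearized analysis. -/
theorem frequency_decay_estimates :
    (∀ m ε J : ℝ, 0 ≤ m → 0 < ε → ε ≤ 1 → m + 3/2 < J →
      ∃ C > 0, ∀ t : ℝ, 0 ≤ t →
        (∫ k in {k : V3 | ‖k‖ ≤ 1}, ‖k‖ ^ (2 * m) * (1 + ε/4 * ‖k‖ ^ 2 * t) ^ (-J))
          ≤ C * (1 + t) ^ (-(m + 3/2))) ∧
    (∀ ε J j : ℝ, 0 < ε → ε ≤ 1 → 0 ≤ j → j ≤ J →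
      ∃ C > 0, ∀ t : ℝ, 0 ≤ t → ∀ k : V3, 1 ≤ ‖k‖ →
        (1 + ε * t / (4 * ‖k‖ ^ 2)) ^ (-J) * ‖k‖ ^ (-(2 * j)) ≤ C * (1 + t) ^ (-j)) := by
  constructor
  · intro m ε J hm hε hε1 hJ
    have hc0 : (0:ℝ) < ε/4 := by positivity
    set c : ℝ := ε/4 with hcdef
    have hp0 : (0:ℝ) < m + 3/2 := by linarith
    have hdim : (Module.finrank ℝ V3) = 3 := finrank_euclideanSpace_fin
    set F : V3 → ℝ := fun u => ‖u‖ ^ (2*m) * (1 + ‖u‖ ^ 2) ^ (-J) with hFdef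
    have hFnonneg : ∀ u, 0 ≤ F u := fun u => by
      have h1 : (0:ℝ) < 1 + ‖u‖ ^ 2 := by positivity
      exact mul_nonneg (Real.rpow_nonneg (norm_nonneg u) _) (Real.rpow_nonneg h1.le _)
    have hFcont : Continuous F := by
      refine Continuous.mul ?_ ?_
      · exact continuous_norm.rpow_const fun x => Or.inr (by linarith)
      · exact (continuous_const.add (continuous_norm.pow 2)).rpow_const
          fun x => Or.inl (by have h : (0:ℝ) < 1 + ‖x‖ ^ 2 := (by positivity); exact h.ne')
    -- pointwise domination
    have hdom : ∀ u : V3, F u ≤ (2:ℝ) ^ (J - m) * (1 + ‖u‖) ^ (-(2 * (J - m))) := by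
      intro u
      have h0 : (0:ℝ) < 1 + ‖u‖ ^ 2 := by positivity
      have h0' : (0:ℝ) < 1 + ‖u‖ := by positivity
      have hsq : ‖u‖ ^ (2*m) = ((‖u‖ ^ 2 : ℝ)) ^ m := by
        rw [← Real.rpow_natCast ‖u‖ 2, ← Real.rpow_mul (norm_nonneg u)]; norm_num
      have h1 : ‖u‖ ^ (2*m) ≤ (1 + ‖u‖ ^ 2) ^ m := by
        rw [hsq]
        exact Real.rpow_le_rpow (by positivity) (by linarith) hm
      have h2 : F u ≤ (1 + ‖u‖ ^ 2) ^ (m - J) := by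
        calc F u ≤ (1 + ‖u‖ ^ 2) ^ m * (1 + ‖u‖ ^ 2) ^ (-J) :=
              mul_le_mul_of_nonneg_right h1 (Real.rpow_nonneg h0.le _)
          _ = (1 + ‖u‖ ^ 2) ^ (m - J) := by
              rw [← Real.rpow_add h0]; ring_nf
      have h3 : (1 + ‖u‖) ^ (2 * (J - m)) ≤ (2:ℝ) ^ (J - m) * (1 + ‖u‖ ^ 2) ^ (J - m) := by
        have hsq2 : (1 + ‖u‖) ^ (2 * (J - m)) = (((1 + ‖u‖) ^ 2 : ℝ)) ^ (J - m) := by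
          rw [← Real.rpow_natCast (1 + ‖u‖) 2, ← Real.rpow_mul h0'.le]; norm_num
        rw [hsq2, ← Real.mul_rpow (by norm_num) h0.le]
        refine Real.rpow_le_rpow (by positivity) ?_ (by linarith)
        nlinarith [sq_nonneg (1 - ‖u‖)]
      have hX : (0:ℝ) < (1 + ‖u‖ ^ 2) ^ (J - m) := Real.rpow_pos_of_pos h0 _
      have hY : (0:ℝ) < (1 + ‖u‖) ^ (2 * (J - m)) := Real.rpow_pos_of_pos h0' _
      have h4 : (1 + ‖u‖ ^ 2) ^ (m - J) ≤ (2:ℝ) ^ (J - m) * (1 + ‖u‖) ^ (-(2 * (J - m))) := by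
        rw [show m - J = -(J - m) by ring, Real.rpow_neg h0.le, Real.rpow_neg h0'.le,
          ← one_div, ← div_eq_mul_inv, div_le_div_iff₀ hX hY, one_mul]
        exact h3
      exact h2.trans h4
    have hFint : Integrable F := by
      refine Integrable.mono' (g := fun u => (2:ℝ) ^ (J - m) * (1 + ‖u‖) ^ (-(2 * (J - m))))
        ?_ hFcont.aestronglyMeasurable ?_
      · refine (integrable_one_add_norm ?_).const_mul _
        rw [hdim]; push_cast; linarith
      · exact Filter.Eventually.of_forall fun u => by
          rw [Real.norm_eq_abs, abs_of_nonneg (hFnonneg u)]; exact hdom u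
    set I : ℝ := ∫ u : V3, F u with hIdef
    have hI0 : 0 ≤ I := integral_nonneg hFnonneg
    have hSmeas : MeasurableSet {k : V3 | ‖k‖ ≤ 1} :=
      measurableSet_le measurable_norm measurable_const
    have hSfin : volume {k : V3 | ‖k‖ ≤ 1} < ⊤ := by
      have hSeq : {k : V3 | ‖k‖ ≤ 1} = Metric.closedBall 0 1 := by
        ext k; simp [Metric.mem_closedBall, dist_zero_right]
      rw [hSeq]; exact measure_closedBall_lt_top
    set vol : ℝ := (volume {k : V3 | ‖k‖ ≤ 1}).toReal with hvol
    have hvol0 : 0 ≤ vol := ENNReal.toReal_nonneg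
    refine ⟨max (vol * 2 ^ (m + 3/2)) (I * (2/c) ^ (m + 3/2)) + 1, ?_, ?_⟩
    · have h1 : (0:ℝ) ≤ vol * 2 ^ (m + 3/2) :=
        mul_nonneg hvol0 (Real.rpow_nonneg (by norm_num) _)
      have h2 := h1.trans (le_max_left _ (I * (2/c) ^ (m + 3/2)))
      linarith
    intro t ht
    set C : ℝ := max (vol * 2 ^ (m + 3/2)) (I * (2/c) ^ (m + 3/2)) + 1 with hCdef
    have h1t : (0:ℝ) < 1 + t := by linarith
    have hpt : (0:ℝ) < (1 + t) ^ (-(m + 3/2)) := Real.rpow_pos_of_pos h1t _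
    have hbase : ∀ x : V3, (0:ℝ) ≤ c * ‖x‖ ^ 2 * t :=
      fun x => mul_nonneg (mul_nonneg hc0.le (sq_nonneg _)) ht
    rcases le_or_gt t 1 with htle | htgt
    · -- small times
      have hbd : ∀ x ∈ {k : V3 | ‖k‖ ≤ 1},
          ‖‖x‖ ^ (2 * m) * (1 + c * ‖x‖ ^ 2 * t) ^ (-J)‖ ≤ 1 := by
        intro x hx
        have hx1 : ‖x‖ ≤ 1 := hx
        have hb1 : ‖x‖ ^ (2 * m) ≤ 1 :=
          Real.rpow_le_one (norm_nonneg x) hx1 (by linarith)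
        have hb2 : (1 + c * ‖x‖ ^ 2 * t) ^ (-J) ≤ 1 :=
          Real.rpow_le_one_of_one_le_of_nonpos (by linarith [hbase x]) (by linarith)
        have hnn : (0:ℝ) ≤ ‖x‖ ^ (2 * m) * (1 + c * ‖x‖ ^ 2 * t) ^ (-J) :=
          mul_nonneg (Real.rpow_nonneg (norm_nonneg x) _)
            (Real.rpow_nonneg (by linarith [hbase x]) _)
        rw [Real.norm_eq_abs, abs_of_nonneg hnn]
        calc ‖x‖ ^ (2 * m) * (1 + c * ‖x‖ ^ 2 * t) ^ (-J)
            ≤ 1 * 1 := mul_le_mul hb1 hb2 (Real.rpow_nonneg (by linarith [hbase x]) _)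
              (by norm_num)
          _ = 1 := by norm_num
      have hle : (∫ k in {k : V3 | ‖k‖ ≤ 1}, ‖k‖ ^ (2 * m) * (1 + c * ‖k‖ ^ 2 * t) ^ (-J)) ≤ vol := by
        have hnle := norm_setIntegral_le_of_norm_le_const hSfin hbd
        rw [one_mul, Real.norm_eq_abs] at hnle
        exact (le_abs_self _).trans hnle
      have h2t : (2:ℝ) ^ (-(m + 3/2)) ≤ (1 + t) ^ (-(m + 3/2)) :=
        Real.rpow_le_rpow_of_nonpos h1t (by linarith) (by linarith)
      calc (∫ k in {k : V3 | ‖k‖ ≤ 1}, ‖k‖ ^ (2 * m) * (1 + c * ‖k‖ ^ 2 * t) ^ (-J)) ≤ vol := hle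
        _ = (vol * 2 ^ (m + 3/2)) * 2 ^ (-(m + 3/2)) := by
            rw [mul_assoc, ← Real.rpow_add (by norm_num : (0:ℝ) < 2),
              show m + 3/2 + -(m + 3/2) = 0 by ring, Real.rpow_zero, mul_one]
        _ ≤ (vol * 2 ^ (m + 3/2)) * (1 + t) ^ (-(m + 3/2)) :=
            mul_le_mul_of_nonneg_left h2t
              (mul_nonneg hvol0 (Real.rpow_nonneg (by norm_num) _))
        _ ≤ C * (1 + t) ^ (-(m + 3/2)) := by
            refine mul_le_mul_of_nonneg_right ?_ hpt.le
            have := le_max_left (vol * 2 ^ (m + 3/2)) (I * (2/c) ^ (m + 3/2))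
            linarith
    · -- large times
      have hct : (0:ℝ) < c * t := mul_pos hc0 (by linarith)
      set a : ℝ := (c * t) ^ ((1:ℝ)/2) with hadef
      have ha : (0:ℝ) < a := Real.rpow_pos_of_pos hct _
      have ha2 : a ^ 2 = c * t := by
        rw [hadef, ← Real.rpow_natCast ((c*t) ^ ((1:ℝ)/2)) 2, ← Real.rpow_mul hct.le]
        norm_num
      have ha3 : (a ^ 3 : ℝ) = (c * t) ^ ((3:ℝ)/2) := by
        rw [hadef, ← Real.rpow_natCast ((c*t) ^ ((1:ℝ)/2)) 3, ← Real.rpow_mul hct.le]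
        norm_num
      have hcomb : (c*t) ^ (-m) * (c*t) ^ m = 1 := by
        rw [← Real.rpow_add hct, show -m + m = 0 by ring, Real.rpow_zero]
      have heq : (fun k : V3 => ‖k‖ ^ (2 * m) * (1 + c * ‖k‖ ^ 2 * t) ^ (-J))
          = fun k : V3 => (c * t) ^ (-m) * F (a • k) := by
        funext k
        have hnk : ‖a • k‖ = a * ‖k‖ := by
          rw [norm_smul, Real.norm_eq_abs, abs_of_pos ha]
        have hm1 : (a * ‖k‖ : ℝ) ^ (2 * m) = (c * t) ^ m * ‖k‖ ^ (2 * m) := by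
          rw [Real.mul_rpow ha.le (norm_nonneg k)]
          congr 1
          rw [← ha2, ← Real.rpow_natCast a 2, ← Real.rpow_mul ha.le]
          norm_num
        have hm2 : ((1:ℝ) + (a * ‖k‖) ^ 2) = 1 + c * ‖k‖ ^ 2 * t := by
          rw [mul_pow, ha2]; ring
        calc ‖k‖ ^ (2 * m) * (1 + c * ‖k‖ ^ 2 * t) ^ (-J)
            = ((c*t) ^ (-m) * (c*t) ^ m) * (‖k‖ ^ (2 * m) * (1 + c * ‖k‖ ^ 2 * t) ^ (-J)) := by
              rw [hcomb, one_mul]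
          _ = (c * t) ^ (-m) * F (a • k) := by
              simp only [hFdef]
              rw [hnk, hm1, hm2]; ring
      have hgint : Integrable (fun k : V3 => ‖k‖ ^ (2 * m) * (1 + c * ‖k‖ ^ 2 * t) ^ (-J)) := by
        rw [heq]
        exact ((integrable_comp_smul_iff volume F ha.ne').mpr hFint).const_mul _
      have hgnn : ∀ k : V3, 0 ≤ ‖k‖ ^ (2 * m) * (1 + c * ‖k‖ ^ 2 * t) ^ (-J) := fun k =>
        mul_nonneg (Real.rpow_nonneg (norm_nonneg k) _)
          (Real.rpow_nonneg (by linarith [hbase k]) _)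
      have hsetle : (∫ k in {k : V3 | ‖k‖ ≤ 1}, ‖k‖ ^ (2 * m) * (1 + c * ‖k‖ ^ 2 * t) ^ (-J))
          ≤ ∫ k : V3, ‖k‖ ^ (2 * m) * (1 + c * ‖k‖ ^ 2 * t) ^ (-J) :=
        setIntegral_le_integral hgint (Filter.Eventually.of_forall hgnn)
      have hval : (∫ k : V3, ‖k‖ ^ (2 * m) * (1 + c * ‖k‖ ^ 2 * t) ^ (-J))
          = (c * t) ^ (-(m + 3/2)) * I := by
        rw [heq, integral_const_mul, Measure.integral_comp_smul volume F a, hdim, smul_eq_mul,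
          abs_of_pos (inv_pos.mpr (pow_pos ha 3)), ha3,
          ← Real.rpow_neg hct.le, ← mul_assoc, ← Real.rpow_add hct,
          show -m + -((3:ℝ)/2) = -(m + 3/2) by ring]
      have hmono : (c * t) ^ (-(m + 3/2)) ≤ (2/c) ^ (m + 3/2) * (1 + t) ^ (-(m + 3/2)) := by
        have hkey : (c/2) * (1 + t) ≤ c * t := by nlinarith
        have h1 : (c * t) ^ (-(m + 3/2)) ≤ ((c/2) * (1 + t)) ^ (-(m + 3/2)) :=
          Real.rpow_le_rpow_of_nonpos (by positivity) hkey (by linarith)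
        have h2 : ((c/2) * (1 + t)) ^ (-(m + 3/2))
            = (2/c) ^ (m + 3/2) * (1 + t) ^ (-(m + 3/2)) := by
          rw [Real.mul_rpow (by positivity) h1t.le]
          congr 1
          rw [Real.rpow_neg (by positivity), ← Real.inv_rpow (by positivity), inv_div]
        rw [← h2]; exact h1
      calc (∫ k in {k : V3 | ‖k‖ ≤ 1}, ‖k‖ ^ (2 * m) * (1 + c * ‖k‖ ^ 2 * t) ^ (-J))
          ≤ (c * t) ^ (-(m + 3/2)) * I := by rw [← hval]; exact hsetle
        _ ≤ ((2/c) ^ (m + 3/2) * (1 + t) ^ (-(m + 3/2))) * I :=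
            mul_le_mul_of_nonneg_right hmono hI0
        _ = (I * (2/c) ^ (m + 3/2)) * (1 + t) ^ (-(m + 3/2)) := by ring
        _ ≤ C * (1 + t) ^ (-(m + 3/2)) := by
            refine mul_le_mul_of_nonneg_right ?_ hpt.le
            have := le_max_right (vol * 2 ^ (m + 3/2)) (I * (2/c) ^ (m + 3/2))
            linarith
  · intro ε J j hε hε1 hj hjJ
    refine ⟨(4/ε) ^ j, Real.rpow_pos_of_pos (by positivity) _, ?_⟩
    intro t ht k hk
    have hk0 : (0:ℝ) < ‖k‖ := lt_of_lt_of_le one_pos hk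
    set A : ℝ := 1 + ε * t / (4 * ‖k‖ ^ 2) with hA
    have hA1 : 1 ≤ A := by
      have h0 : 0 ≤ ε * t / (4 * ‖k‖ ^ 2) := by positivity
      rw [hA]
      exact le_add_of_nonneg_right h0
    have hA0 : (0:ℝ) < A := lt_of_lt_of_le one_pos hA1
    have hexp : 4/ε * A * ‖k‖ ^ 2 = 4/ε * ‖k‖ ^ 2 + t := by
      rw [hA]; field_simp
    have hkk : (1:ℝ) ≤ ‖k‖ ^ 2 := by nlinarith
    have h4e : (1:ℝ) ≤ 4/ε * ‖k‖ ^ 2 := by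
      have : (1:ℝ) ≤ 4/ε := by rw [le_div_iff₀ hε]; linarith
      nlinarith
    have hkey : 1 + t ≤ 4/ε * A * ‖k‖ ^ 2 := by rw [hexp]; linarith
    have hk2 : (‖k‖ ^ 2 : ℝ) ^ j = ‖k‖ ^ (2 * j) := by
      rw [← Real.rpow_natCast ‖k‖ 2, ← Real.rpow_mul (norm_nonneg k)]; norm_num
    have h1t : (1 + t) ^ j ≤ (4/ε) ^ j * (A ^ J * ‖k‖ ^ (2 * j)) := by
      calc (1 + t) ^ j ≤ (4/ε * A * ‖k‖ ^ 2) ^ j := Real.rpow_le_rpow (by linarith) hkey hj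
      _ = (4/ε) ^ j * A ^ j * (‖k‖ ^ 2) ^ j := by
          rw [Real.mul_rpow (by positivity) (by positivity),
            Real.mul_rpow (by positivity) hA0.le]
      _ ≤ (4/ε) ^ j * (A ^ J * ‖k‖ ^ (2 * j)) := by
          rw [hk2, mul_assoc]
          have hAJ : A ^ j ≤ A ^ J := Real.rpow_le_rpow_of_exponent_le hA1 hjJ
          exact mul_le_mul_of_nonneg_left
            (mul_le_mul_of_nonneg_right hAJ (Real.rpow_nonneg (norm_nonneg k) _))
            (Real.rpow_nonneg (by positivity) _)
    have hx : (0:ℝ) < A ^ J * ‖k‖ ^ (2 * j) :=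
      mul_pos (Real.rpow_pos_of_pos hA0 _) (Real.rpow_pos_of_pos hk0 _)
    have hy : (0:ℝ) < (1 + t) ^ j := Real.rpow_pos_of_pos (by linarith) _
    rw [Real.rpow_neg hA0.le, Real.rpow_neg (norm_nonneg k),
      Real.rpow_neg (by linarith : (0:ℝ) ≤ 1 + t), ← mul_inv, ← one_div, ← div_eq_mul_inv,
      div_le_div_iff₀ hx hy, one_mul]
    linarith
end
end
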